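/- Let ε = (ε_1, …, ε_d) be a random vector with independent standard normal coordinates, let μ ∈ ℝ^d be a fixed vector, set M = μ + ε, and let A be a fixed real d×d matrix. Then E(‖μ − A M‖²) = E(‖M − A M‖²) − d + 2 tr(A), where ‖·‖ is the Euclidean norm. -/

import Mathlib

/-!
With `e = μ - A M` we have `M - A M = e + ε` and `e = (μ - A μ) - A ε`, so pointwise
`‖M - A M‖² = ‖e‖² + ‖ε‖² + 2 ⟪ε, μ - A μ⟫ - 2 ⟪ε, A ε⟫`.
Only the first two moments of `ε` enter: `E ⟪ε, c⟫ = 0` and `E ⟪ε, B ε⟫ = tr B` (with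
`B = 1` for `‖ε‖²`), so taking expectations gives `E ‖M - A M‖² = E ‖μ - A M‖² + d - 2 tr A`.
Gaussianity is used only to supply mean zero and identity covariance.
-/

open MeasureTheory ProbabilityTheory Matrix
open scoped NNReal ENNReal

section IsotropicNoise

variable {Ω ι : Type*} [MeasurableSpace Ω] {μ : Measure Ω} [Fintype ι]

theorem MeasureTheory.MemLp.mulVec {κ : Type*} [Fintype κ] {p : ℝ≥0∞} {X : Ω → ι → ℝ}
    (hX : MemLp X p μ) (A : Matrix κ ι ℝ) : MemLp (fun ω => A *ᵥ X ω) p μ :=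
  (Matrix.mulVecLin A).toContinuousLinearMap.comp_memLp' hX

theorem MeasureTheory.MemLp.integrable_dotProduct {Y Z : Ω → ι → ℝ} (hY : MemLp Y 2 μ)
    (hZ : MemLp Z 2 μ) : Integrable (fun ω => Y ω ⬝ᵥ Z ω) μ :=
  integrable_finsetSum _ fun i _ => (hY.eval i).integrable_mul (hZ.eval i)

theorem integral_dotProduct_const {X : Ω → ι → ℝ} (hX : Integrable X μ) (c : ι → ℝ) :
    ∫ ω, X ω ⬝ᵥ c ∂μ = (∫ ω, X ω ∂μ) ⬝ᵥ c := by
  simp only [dotProduct]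
  rw [integral_finsetSum _ fun i _ => (hX.eval i).mul_const _]
  simp only [integral_mul_const, eval_integral hX.eval]

variable [DecidableEq ι]

theorem integral_mul_eval_eq_one_apply [IsProbabilityMeasure μ] {X : Ω → ι → ℝ}
    (hX : MemLp X 2 μ) (hmean : μ[X] = 0)
    (hcov : ∀ i j, cov[fun ω => X ω i, fun ω => X ω j; μ] = (1 : Matrix ι ι ℝ) i j)
    (i j : ι) :
    ∫ ω, X ω i * X ω j ∂μ = (1 : Matrix ι ι ℝ) i j := by
  have hmean_eval (k : ι) : ∫ ω, X ω k ∂μ = 0 := by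
    rw [← eval_integral (hX.integrable one_le_two).eval, hmean, Pi.zero_apply]
  rw [← hcov, covariance_eq_sub (hX.eval i) (hX.eval j), hmean_eval, hmean_eval]
  simp only [Pi.mul_apply, mul_zero, sub_zero]

theorem integral_dotProduct_mulVec_eq_trace [IsProbabilityMeasure μ] {X : Ω → ι → ℝ}
    (hX : MemLp X 2 μ) (hmean : μ[X] = 0)
    (hcov : ∀ i j, cov[fun ω => X ω i, fun ω => X ω j; μ] = (1 : Matrix ι ι ℝ) i j)
    (A : Matrix ι ι ℝ) : ∫ ω, X ω ⬝ᵥ (A *ᵥ X ω) ∂μ = A.trace := by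
  have hint (i j : ι) : Integrable (fun ω => A i j * (X ω i * X ω j)) μ :=
    ((hX.eval i).integrable_mul (hX.eval j)).const_mul _
  calc ∫ ω, X ω ⬝ᵥ (A *ᵥ X ω) ∂μ
      = ∫ ω, ∑ i, ∑ j, A i j * (X ω i * X ω j) ∂μ := by
        congr with ω
        simp only [dotProduct, mulVec, Finset.mul_sum]
        exact Finset.sum_congr rfl fun i _ => Finset.sum_congr rfl fun j _ => by ring
    _ = ∑ i, ∑ j, A i j * (1 : Matrix ι ι ℝ) i j := by
        rw [integral_finsetSum _ fun i _ => integrable_finsetSum _ fun j _ => hint i j]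
        refine Finset.sum_congr rfl fun i _ => ?_
        rw [integral_finsetSum _ fun j _ => hint i j]
        simp only [integral_const_mul, integral_mul_eval_eq_one_apply hX hmean hcov]
    _ = A.trace := by simp [one_apply, trace]

theorem integral_error_sq_eq_integral_residual_sq_sub_card_add_two_mul_trace
    [IsProbabilityMeasure μ] {X : Ω → ι → ℝ}
    (hX : MemLp X 2 μ) (hmean : μ[X] = 0)
    (hcov : ∀ i j, cov[fun ω => X ω i, fun ω => X ω j; μ] = (1 : Matrix ι ι ℝ) i j)
    (c : ι → ℝ) (A : Matrix ι ι ℝ) :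
    ∫ ω, (c - A *ᵥ (c + X ω)) ⬝ᵥ (c - A *ᵥ (c + X ω)) ∂μ
      = ∫ ω, (c + X ω - A *ᵥ (c + X ω)) ⬝ᵥ (c + X ω - A *ᵥ (c + X ω)) ∂μ
        - Fintype.card ι + 2 * A.trace := by
  set e : Ω → ι → ℝ := fun ω => c - A *ᵥ (c + X ω)
  have he : MemLp e 2 μ := (memLp_const c).sub (((memLp_const c).add hX).mulVec A)
  have hres (ω : Ω) : (c + X ω - A *ᵥ (c + X ω)) ⬝ᵥ (c + X ω - A *ᵥ (c + X ω))
      = e ω ⬝ᵥ e ω + X ω ⬝ᵥ (1 *ᵥ X ω) + 2 * (X ω ⬝ᵥ (c - A *ᵥ c))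
        - 2 * (X ω ⬝ᵥ (A *ᵥ X ω)) := by
    simp only [e, one_mulVec, mulVec_add, add_dotProduct, dotProduct_add, sub_dotProduct,
      dotProduct_sub, dotProduct_comm (X ω)]
    ring
  have hee := he.integrable_dotProduct he
  have hXX := hX.integrable_dotProduct (hX.mulVec 1)
  have hXc := hX.integrable_dotProduct (memLp_const (c - A *ᵥ c))
  have hXAX := hX.integrable_dotProduct (hX.mulVec A)
  rw [integral_congr_ae (Filter.Eventually.of_forall hres),
    integral_sub (by fun_prop) (by fun_prop), integral_add (by fun_prop) (by fun_prop),
    integral_add hee hXX,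
    integral_const_mul, integral_const_mul, integral_dotProduct_const (hX.integrable one_le_two),
    hmean, zero_dotProduct, integral_dotProduct_mulVec_eq_trace hX hmean hcov,
    integral_dotProduct_mulVec_eq_trace hX hmean hcov, trace_one]
  ring

end IsotropicNoise

section GaussianNoise

variable {Ω ι : Type*} [MeasurableSpace Ω] {μ : Measure Ω} [Fintype ι]

theorem ProbabilityTheory.HasLaw.eval_of_pi {𝓧 : ι → Type*} [∀ i, MeasurableSpace (𝓧 i)]
    {ν : ∀ i, Measure (𝓧 i)} [∀ i, IsProbabilityMeasure (ν i)] {X : Ω → ∀ i, 𝓧 i}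
    (hX : HasLaw X (Measure.pi ν) μ) (i : ι) : HasLaw (fun ω => X ω i) (ν i) μ :=
  (measurePreserving_eval ν i).comp_hasLaw hX

theorem ProbabilityTheory.HasLaw.iIndepFun_eval_of_pi [IsProbabilityMeasure μ] {𝓧 : ι → Type*}
    [∀ i, MeasurableSpace (𝓧 i)] {ν : ∀ i, Measure (𝓧 i)} [∀ i, IsProbabilityMeasure (ν i)]
    {X : Ω → ∀ i, 𝓧 i} (hX : HasLaw X (Measure.pi ν) μ) :
    iIndepFun (fun i ω => X ω i) μ :=
  (iIndepFun_iff_hasLaw_pi_pi hX.eval_of_pi).2 hX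

variable {ε : Ω → ι → ℝ} {m : ℝ} {v : ℝ≥0}

theorem ProbabilityTheory.HasLaw.memLp_of_pi_gaussianReal
    (hε : HasLaw ε (Measure.pi fun _ => gaussianReal m v) μ) {p : ℝ≥0∞} (hp : p ≠ ∞) :
    MemLp ε p μ := by
  refine MemLp.of_eval fun i => ?_
  have h := memLp_id_gaussianReal' (μ := m) (v := v) p hp
  rw [← (hε.eval_of_pi i).map_eq] at h
  exact h.comp_of_map (hε.eval_of_pi i).aemeasurable

theorem ProbabilityTheory.HasLaw.integral_of_pi_gaussianReal
    (hε : HasLaw ε (Measure.pi fun _ => gaussianReal m v) μ) :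
    μ[ε] = fun _ => m := by
  funext i
  have hint : Integrable ε μ :=
    memLp_one_iff_integrable.1 (hε.memLp_of_pi_gaussianReal ENNReal.one_ne_top)
  rw [eval_integral hint.eval,
    (hε.eval_of_pi i).integral_eq, integral_id_gaussianReal]

theorem ProbabilityTheory.HasLaw.covariance_eval_of_pi_gaussianReal [DecidableEq ι]
    (hε : HasLaw ε (Measure.pi fun _ => gaussianReal m v) μ) (i j : ι) :
    cov[fun ω => ε ω i, fun ω => ε ω j; μ] = v * (1 : Matrix ι ι ℝ) i j := by
  have : IsProbabilityMeasure μ := hε.isProbabilityMeasure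
  have hL2 := hε.memLp_of_pi_gaussianReal ENNReal.ofNat_ne_top (p := 2)
  rcases eq_or_ne i j with rfl | hij
  · rw [covariance_self (hε.eval_of_pi i).aemeasurable, (hε.eval_of_pi i).variance_eq,
      variance_id_gaussianReal, one_apply_eq, mul_one]
  · rw [(hε.iIndepFun_eval_of_pi.indepFun hij).covariance_eq_zero (hL2.eval i) (hL2.eval j),
      one_apply_ne hij, mul_zero]

end GaussianNoise

/-- If `ε` is a random vector in `ℝ^d` with independent standard normal coordinates,
`M = μvec + ε`, and `A` is a fixed `d × d` real matrix, then
`E(‖μvec − A M‖²) = E(‖M − A M‖²) − d + 2 tr(A)`, where `‖x‖² = x ⬝ᵥ x` is the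
squared Euclidean norm. -/
theorem expected_squared_error_identity
    {Ω : Type*} [MeasurableSpace Ω] (μ : Measure Ω) [IsProbabilityMeasure μ]
    {d : ℕ} (ε : Ω → (Fin d → ℝ)) (hmeas : Measurable ε)
    (hlaw : Measure.map ε μ = Measure.pi (fun _ : Fin d => gaussianReal 0 1))
    (μvec : Fin d → ℝ) (M : Ω → (Fin d → ℝ)) (hM : ∀ ω, M ω = μvec + ε ω)
    (A : Matrix (Fin d) (Fin d) ℝ) :
    ∫ ω, (μvec - A *ᵥ (M ω)) ⬝ᵥ (μvec - A *ᵥ (M ω)) ∂μ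
      = (∫ ω, (M ω - A *ᵥ (M ω)) ⬝ᵥ (M ω - A *ᵥ (M ω)) ∂μ) - d + 2 * A.trace := by
  have hε : HasLaw ε (Measure.pi fun _ => gaussianReal 0 1) μ := ⟨hmeas.aemeasurable, hlaw⟩
  have hcov (i j : Fin d) := hε.covariance_eval_of_pi_gaussianReal i j
  simp only [NNReal.coe_one, one_mul] at hcov
  simp only [hM]
  rw [integral_error_sq_eq_integral_residual_sq_sub_card_add_two_mul_trace
    (hε.memLp_of_pi_gaussianReal ENNReal.ofNat_ne_top) hε.integral_of_pi_gaussianReal hcov,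
    Fintype.card_fin]
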